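/- For n ≥ 3, every induced-A₃-saturated family in B_n has size exactly 2n, i.e., isat(n, A₃) = 2n. -/

import Mathlib

/-- `F` contains `m` pairwise incomparable sets (an induced copy of the
antichain `A_m`). -/
def AntichainCopy {n : ℕ} (m : ℕ) (F : Finset (Finset (Fin n))) : Prop :=
  ∃ G ⊆ F, G.card = m ∧ IsAntichain (· ⊆ ·) (G : Set (Finset (Fin n)))

/-- `F` is induced-`A_m`-saturated in `B_n`. -/
def ASaturated {n : ℕ} (m : ℕ) (F : Finset (Finset (Fin n))) : Prop :=
  ¬ AntichainCopy m F ∧ ∀ S ∉ F, AntichainCopy m (insert S F)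

/-!
Every saturated family `F` contains `∅` and `[n]`, which are comparable with everything. Being
`A₃`-free, `F` is covered by two chains (Dilworth). Fix `0 < k < n`. If all `k`-sets of `F` lay
in one chain `C`, the other chain `D` would jump over level `k` between sets `A₁ ⊆ A₂` with
`|A₁| < k < |A₂|`. Every `k`-set `V` with `A₁ ⊆ V ⊆ A₂` is comparable with all of `D`, so it lies
in `C`: either `V ∈ F`, or saturation yields two incomparable members of `F` incomparable with
`V`, both necessarily in `C`, which is absurd. But there are at least two such `k`-sets, and a
chain holds at most one set of each size. So every middle level of `F` has at least two sets,
and `|F| ≥ 1 + 2(n - 1) + 1 = 2n`.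

Conversely, the prefixes `{0, …, i - 1}` and their complements form two maximal chains meeting
only in `∅` and `[n]`; a set `S` outside them forms an antichain with the prefix and the suffix
of size `|S|`.
-/

open Finset

local infix:50 " ∥ " => IncompRel (· ≤ ·)

section Width

variable {α : Type*} [PartialOrder α] {s C D : Finset α} {a b : α}

theorem IsChain.not_incompRel {t : Set α} (ht : IsChain (· ≤ ·) t) (ha : a ∈ t) (hb : b ∈ t) :
    ¬ a ∥ b :=
  fun h ↦ (ht.total ha hb).elim h.1 h.2

theorem IsChain.exists_forall_le (hC : IsChain (· ≤ ·) (C : Set α)) (hne : C.Nonempty) :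
    ∃ m ∈ C, ∀ x ∈ C, x ≤ m := by
  obtain ⟨m, hm⟩ := C.exists_maximal hne
  exact ⟨m, hm.1, fun x hx ↦ (hC.total hx hm.1).elim id (hm.2 hx)⟩

theorem IsChain.exists_forall_ge (hC : IsChain (· ≤ ·) (C : Set α)) (hne : C.Nonempty) :
    ∃ m ∈ C, ∀ x ∈ C, m ≤ x := by
  obtain ⟨m, hm⟩ := C.exists_minimal hne
  exact ⟨m, hm.1, fun x hx ↦ (hC.total hm.1 hx).elim id (hm.2 hx)⟩

theorem isChain_of_forall_not_incompRel (h : ∀ x ∈ s, ∀ y ∈ s, ¬ x ∥ y) :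
    IsChain (· ≤ ·) (s : Set α) := fun x hx y hy _ ↦ by
  by_contra hxy
  exact h x hx y hy (not_or.mp hxy)

variable [DecidableEq α]

/-- Galvin's step: `a` extends the chain `{x ∈ C | x ≤ b}`, and the rest of `s` is a chain. -/
theorem exists_isChain_union_eq_of_erase (ha : a ∈ s) (hcov : C ∪ D = s.erase a)
    (hC : IsChain (· ≤ ·) (C : Set α)) (hD : IsChain (· ≤ ·) (D : Set α)) (hba : b ≤ a)
    (hb : ∀ x ∈ C, (∃ y ∈ s.erase a, x ∥ y) → x ≤ b) :
    ∃ C' D' : Finset α, IsChain (· ≤ ·) (C' : Set α) ∧ IsChain (· ≤ ·) (D' : Set α) ∧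
      C' ∪ D' = s := by
  classical
  set K := insert a {x ∈ C | x ≤ b}
  have hKs : K ⊆ s := by
    refine insert_subset ha fun x hx ↦ ?_
    have : x ∈ C ∪ D := mem_union_left _ (mem_filter.mp hx).1
    exact mem_of_mem_erase (hcov ▸ this)
  refine ⟨K, s \ K, ?_, ?_, union_sdiff_of_subset hKs⟩
  · rw [coe_insert]
    refine (hC.mono (coe_subset.mpr (filter_subset _ _))).insert fun x hx _ ↦ Or.inr ?_
    exact (mem_filter.mp hx).2.trans hba
  refine isChain_of_forall_not_incompRel fun x hx y hy hxy ↦ ?_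
  have mem_erase_of_mem_sdiff : ∀ z ∈ s \ K, z ∈ s.erase a := fun z hz ↦
    mem_erase.mpr ⟨fun h ↦ (mem_sdiff.mp hz).2 (h ▸ mem_insert_self _ _), (mem_sdiff.mp hz).1⟩
  have mem_D : ∀ z ∈ s \ K, ∀ w ∈ s \ K, z ∥ w → z ∈ D := fun z hz w hw hzw ↦ by
    rcases mem_union.mp (hcov ▸ mem_erase_of_mem_sdiff z hz) with hzC | hzD
    · have : z ≤ b := hb z hzC ⟨w, mem_erase_of_mem_sdiff w hw, hzw⟩
      exact absurd (mem_insert_of_mem (mem_filter.mpr ⟨hzC, this⟩)) (mem_sdiff.mp hz).2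
    · exact hzD
  exact hD.not_incompRel (mem_D x hx y hy hxy) (mem_D y hy x hx hxy.symm) hxy

theorem exists_greatest_incompRel_mem {t : Finset α} (hcov : C ∪ D = t)
    (hC : IsChain (· ≤ ·) (C : Set α)) (hD : IsChain (· ≤ ·) (D : Set α))
    (ht : ∃ x ∈ t, ∃ y ∈ t, x ∥ y) :
    ∃ b ∈ C, (∃ y ∈ t, b ∥ y) ∧ ∀ x ∈ C, (∃ y ∈ t, x ∥ y) → x ≤ b := by
  classical
  obtain ⟨x, hx, y, hy, hxy⟩ := ht
  have hne : {z ∈ C | ∃ w ∈ t, z ∥ w}.Nonempty := by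
    rw [← hcov] at hx hy
    rcases mem_union.mp hx with hxC | hxD
    · exact ⟨x, mem_filter.mpr ⟨hxC, y, hcov ▸ hy, hxy⟩⟩
    rcases mem_union.mp hy with hyC | hyD
    · exact ⟨y, mem_filter.mpr ⟨hyC, x, hcov ▸ hx, hxy.symm⟩⟩
    · exact absurd hxy (hD.not_incompRel hxD hyD)
  obtain ⟨b, hb, hbmax⟩ := (hC.mono (coe_subset.mpr (filter_subset _ _))).exists_forall_le hne
  exact ⟨b, (mem_filter.mp hb).1, (mem_filter.mp hb).2,
    fun z hz hz' ↦ hbmax z (mem_filter.mpr ⟨hz, hz'⟩)⟩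

theorem not_le_of_forall_incompRel_le {t : Finset α} (hcov : C ∪ D = t)
    (hD : IsChain (· ≤ ·) (D : Set α)) {c : α} (hc : c ∈ D) (hc' : ∃ y ∈ t, c ∥ y)
    (hb : ∀ x ∈ C, (∃ y ∈ t, x ∥ y) → x ≤ b) : ¬ b ≤ c := by
  intro hbc
  obtain ⟨y, hy, hcy⟩ := hc'
  rcases mem_union.mp (hcov ▸ hy) with hyC | hyD
  · exact hcy.2 ((hb y hyC ⟨c, hcov ▸ mem_union_right _ hc, hcy.symm⟩).trans hbc)
  · exact hD.not_incompRel hc hyD hcy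

/-- Dilworth's theorem for width two, by Galvin's induction on `s`. -/
theorem exists_isChain_union_eq_of_width_le_two (s : Finset α)
    (hs : ∀ a ∈ s, ∀ b ∈ s, ∀ c ∈ s, a ∥ b → a ∥ c → ¬ b ∥ c) :
    ∃ C D : Finset α, IsChain (· ≤ ·) (C : Set α) ∧ IsChain (· ≤ ·) (D : Set α) ∧ C ∪ D = s := by
  induction s using Finset.strongInduction with
  | H s ih =>
  rcases s.eq_empty_or_nonempty with rfl | hne
  · exact ⟨∅, ∅, by simp, by simp, by simp⟩
  obtain ⟨a, ha⟩ := s.exists_maximal hne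
  obtain ⟨C, D, hC, hD, hcov⟩ := ih _ (erase_ssubset ha.1) fun x hx y hy z hz ↦
    hs x (mem_of_mem_erase hx) y (mem_of_mem_erase hy) z (mem_of_mem_erase hz)
  by_cases hpair : ∃ x ∈ s.erase a, ∃ y ∈ s.erase a, x ∥ y
  swap
  · push Not at hpair
    refine ⟨{a}, s.erase a, by simp, isChain_of_forall_not_incompRel hpair, ?_⟩
    rw [← insert_eq, insert_erase ha.1]
  obtain ⟨b, hbC, hb, hbmax⟩ := exists_greatest_incompRel_mem hcov hC hD hpair
  obtain ⟨c, hcD, hc, hcmax⟩ :=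
    exists_greatest_incompRel_mem ((union_comm D C).trans hcov) hD hC hpair
  have hbc : b ∥ c := ⟨not_le_of_forall_incompRel_le hcov hD hcD hc hbmax,
    not_le_of_forall_incompRel_le ((union_comm D C).trans hcov) hC hbC hb hcmax⟩
  have hbs : b ∈ s := mem_of_mem_erase (hcov ▸ mem_union_left D hbC)
  have hcs : c ∈ s := mem_of_mem_erase (hcov ▸ mem_union_right C hcD)
  by_cases hba : b ≤ a
  · exact exists_isChain_union_eq_of_erase ha.1 hcov hC hD hba hbmax
  by_cases hca : c ≤ a
  · exact exists_isChain_union_eq_of_erase ha.1 ((union_comm D C).trans hcov) hD hC hca hcmax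
  -- `a` is maximal, so it is incomparable with both `b` and `c`
  exact absurd hbc (hs a ha.1 b hbs c hcs ⟨fun h ↦ hba (ha.2 hbs h), hba⟩
    ⟨fun h ↦ hca (ha.2 hcs h), hca⟩)

end Width

theorem IsAntichain.card_le_two {α : Type*} [PartialOrder α] {G : Finset α} {C D : Set α}
    (hG : IsAntichain (· ≤ ·) (G : Set α)) (hC : IsChain (· ≤ ·) C) (hD : IsChain (· ≤ ·) D)
    (hsub : (G : Set α) ⊆ C ∪ D) : #G ≤ 2 := by
  classical
  have hin : #{x ∈ G | x ∈ C} ≤ 1 := card_le_one_iff_subsingleton.mpr <|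
    (inter_subsingleton_of_isAntichain_of_isChain hG hC).anti fun x hx ↦ mem_filter.mp hx
  have hout : #{x ∈ G | x ∉ C} ≤ 1 := card_le_one_iff_subsingleton.mpr <|
    (inter_subsingleton_of_isAntichain_of_isChain hG hD).anti fun x hx ↦
      ⟨(mem_filter.mp hx).1, (hsub (mem_filter.mp hx).1).resolve_left (mem_filter.mp hx).2⟩
  have := card_filter_add_card_filter_not (s := G) (· ∈ C)
  omega

section FinsetChain

variable {β : Type*}

theorem IsChain.eq_of_card_eq {C : Set (Finset β)} (hC : IsChain (· ≤ ·) C) {u v : Finset β}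
    (hu : u ∈ C) (hv : v ∈ C) (h : #u = #v) : u = v :=
  (hC.total hu hv).elim (fun huv ↦ eq_of_subset_of_card_le huv h.ge)
    fun hvu ↦ (eq_of_subset_of_card_le hvu h.le).symm

theorem Finset.exists_ne_card_eq_of_subset_of_subset [DecidableEq β] {s u t : Finset β}
    (hsu : s ⊆ u) (hut : u ⊆ t) (hs : #s < #u) (ht : #u < #t) :
    ∃ v, s ⊆ v ∧ v ⊆ t ∧ #v = #u ∧ v ≠ u := by
  obtain ⟨x, hxu, hxs⟩ := exists_mem_notMem_of_card_lt_card hs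
  obtain ⟨y, hyt, hyu⟩ := exists_mem_notMem_of_card_lt_card ht
  refine ⟨insert y (u.erase x), fun z hz ↦ ?_, insert_subset hyt ((erase_subset x u).trans hut),
    ?_, fun h ↦ hyu (h ▸ mem_insert_self y _)⟩
  · exact mem_insert_of_mem (mem_erase.mpr ⟨fun h ↦ hxs (h ▸ hz), hsu hz⟩)
  · rw [card_insert_of_notMem fun h ↦ hyu (mem_of_mem_erase h), card_erase_of_mem hxu]
    have := card_pos.mpr ⟨x, hxu⟩
    omega

theorem IsChain.exists_subset_card_lt_lt [Fintype β] {D : Finset (Finset β)}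
    (hD : IsChain (· ≤ ·) (D : Set (Finset β))) {k : ℕ} (hk0 : 0 < k)
    (hk : k < Fintype.card β) :
    ∃ A₁ A₂ : Finset β, A₁ ⊆ A₂ ∧ #A₁ < k ∧ k < #A₂ ∧
      (∀ x ∈ D, #x < k → x ⊆ A₁) ∧ ∀ x ∈ D, k < #x → A₂ ⊆ x := by
  classical
  set D₀ := insert ∅ (insert univ D)
  have hD₀ : IsChain (· ≤ ·) (D₀ : Set (Finset β)) := by
    rw [coe_insert, coe_insert]
    exact (hD.insert fun x _ _ ↦ Or.inr (subset_univ x)).insert fun x _ _ ↦ Or.inl (empty_subset x)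
  have hD₀D : ∀ x ∈ D, x ∈ D₀ := fun x hx ↦ mem_insert_of_mem (mem_insert_of_mem hx)
  obtain ⟨A₁, hA₁, hA₁max⟩ :=
    (hD₀.mono (coe_subset.mpr (filter_subset (#· < k) D₀))).exists_forall_le
      ⟨∅, mem_filter.mpr ⟨mem_insert_self _ _, hk0⟩⟩
  obtain ⟨A₂, hA₂, hA₂min⟩ :=
    (hD₀.mono (coe_subset.mpr (filter_subset (k < #·) D₀))).exists_forall_ge
      ⟨univ, mem_filter.mpr ⟨mem_insert_of_mem (mem_insert_self _ _), by rwa [card_univ]⟩⟩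
  rw [mem_filter] at hA₁ hA₂
  refine ⟨A₁, A₂, ?_, hA₁.2, hA₂.2, fun x hx hxk ↦ hA₁max x (mem_filter.mpr ⟨hD₀D x hx, hxk⟩),
    fun x hx hxk ↦ hA₂min x (mem_filter.mpr ⟨hD₀D x hx, hxk⟩)⟩
  refine (hD₀.total hA₁.1 hA₂.1).resolve_right fun h ↦ ?_
  have := card_le_card h
  omega

end FinsetChain

section Saturated

variable {n : ℕ} {F : Finset (Finset (Fin n))}

theorem antichainCopy_three_of_incompRel {a b c : Finset (Fin n)} (ha : a ∈ F) (hb : b ∈ F)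
    (hc : c ∈ F) (hab : a ∥ b) (hac : a ∥ c) (hbc : b ∥ c) : AntichainCopy 3 F := by
  refine ⟨{a, b, c}, by simp [insert_subset_iff, ha, hb, hc], ?_, ?_⟩
  · exact card_eq_three.mpr ⟨a, b, c, hab.ne, hac.ne, hbc.ne, rfl⟩
  · simp only [coe_insert, coe_singleton, isAntichain_insert, Set.mem_insert_iff,
      Set.mem_singleton_iff, forall_eq_or_imp, forall_eq]
    exact ⟨⟨Set.subsingleton_singleton.isAntichain _, fun _ ↦ hbc⟩, fun _ ↦ hab, fun _ ↦ hac⟩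

namespace ASaturated

theorem width_le_two (hF : ASaturated 3 F) : ∀ a ∈ F, ∀ b ∈ F, ∀ c ∈ F, a ∥ b → a ∥ c → ¬ b ∥ c :=
  fun _ ha _ hb _ hc hab hac hbc ↦ hF.1 (antichainCopy_three_of_incompRel ha hb hc hab hac hbc)

theorem exists_incompRel (hF : ASaturated 3 F) {U : Finset (Fin n)} (hU : U ∉ F) :
    ∃ A ∈ F, ∃ B ∈ F, U ∥ A ∧ U ∥ B ∧ A ∥ B := by
  obtain ⟨G, hGF, hG3, hG⟩ := hF.2 U hU
  have hUG : U ∈ G := by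
    by_contra hUG
    exact hF.1 ⟨G, (subset_insert_iff_of_notMem hUG).mp hGF, hG3, hG⟩
  obtain ⟨A, B, hAB, hGU⟩ := card_eq_two.mp (by rw [card_erase_of_mem hUG, hG3] : #(G.erase U) = 2)
  have hA : A ∈ G.erase U := hGU ▸ mem_insert_self A {B}
  have hB : B ∈ G.erase U := hGU ▸ mem_insert_of_mem (mem_singleton_self B)
  have mem_F : ∀ x ∈ G.erase U, x ∈ F := fun x hx ↦
    (mem_insert.mp (hGF (mem_of_mem_erase hx))).resolve_left (ne_of_mem_erase hx)
  have incomp : ∀ x ∈ G, ∀ y ∈ G, x ≠ y → x ∥ y := fun x hx y hy hxy ↦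
    ⟨hG hx hy hxy, hG hy hx hxy.symm⟩
  exact ⟨A, mem_F A hA, B, mem_F B hB,
    incomp U hUG A (mem_of_mem_erase hA) (ne_of_mem_erase hA).symm,
    incomp U hUG B (mem_of_mem_erase hB) (ne_of_mem_erase hB).symm,
    incomp A (mem_of_mem_erase hA) B (mem_of_mem_erase hB) hAB⟩

theorem empty_mem (hF : ASaturated 3 F) : ∅ ∈ F := by
  by_contra h
  obtain ⟨A, -, -, -, hA, -⟩ := hF.exists_incompRel h
  exact hA.1 (empty_subset A)

theorem univ_mem (hF : ASaturated 3 F) : univ ∈ F := by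
  by_contra h
  obtain ⟨A, -, -, -, hA, -⟩ := hF.exists_incompRel h
  exact hA.2 (subset_univ A)

theorem exists_card_eq_notMem (hF : ASaturated 3 F) {C D : Finset (Finset (Fin n))}
    (hC : IsChain (· ≤ ·) (C : Set (Finset (Fin n))))
    (hD : IsChain (· ≤ ·) (D : Set (Finset (Fin n))))
    (hcov : F ⊆ C ∪ D) {k : ℕ} (hk0 : 0 < k) (hkn : k < n) : ∃ x ∈ F, #x = k ∧ x ∉ C := by
  by_contra! hFC
  obtain ⟨A₁, A₂, hA₁₂, hA₁, hA₂, hbelow, habove⟩ :=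
    hD.exists_subset_card_lt_lt hk0 (by rwa [Fintype.card_fin])
  have mem_C : ∀ V, A₁ ⊆ V → V ⊆ A₂ → #V = k → V ∈ C := by
    intro V h₁ h₂ hV
    by_cases hVF : V ∈ F
    · exact hFC V hVF hV
    have comparable : ∀ x ∈ F, x ∉ C → ¬ V ∥ x := by
      intro x hxF hxC hVx
      have hxD : x ∈ D := (mem_union.mp (hcov hxF)).resolve_left hxC
      have hxk : #x ≠ k := fun h ↦ hxC (hFC x hxF h)
      rcases hxk.lt_or_gt with hlt | hgt
      · exact hVx.2 ((hbelow x hxD hlt).trans h₁)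
      · exact hVx.1 (h₂.trans (habove x hxD hgt))
    obtain ⟨A, hA, B, hB, hVA, hVB, hAB⟩ := hF.exists_incompRel hVF
    have hAC : A ∈ C := by_contra fun h ↦ comparable A hA h hVA
    have hBC : B ∈ C := by_contra fun h ↦ comparable B hB h hVB
    exact absurd hAB (hC.not_incompRel hAC hBC)
  obtain ⟨U, hU₁, hU₂, hU⟩ := exists_subsuperset_card_eq hA₁₂ hA₁.le hA₂.le
  obtain ⟨V, hV₁, hV₂, hV, hVU⟩ :=
    exists_ne_card_eq_of_subset_of_subset hU₁ hU₂ (hU ▸ hA₁) (hU ▸ hA₂)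
  exact hVU (hC.eq_of_card_eq (mem_C V hV₁ hV₂ (hV.trans hU)) (mem_C U hU₁ hU₂ hU) hV)

theorem two_le_card_filter_card_eq (hF : ASaturated 3 F) {k : ℕ} (hk0 : 0 < k) (hkn : k < n) :
    2 ≤ #{A ∈ F | #A = k} := by
  obtain ⟨C, D, hC, hD, hCD⟩ := exists_isChain_union_eq_of_width_le_two F hF.width_le_two
  obtain ⟨x, hxF, hx, hxC⟩ := hF.exists_card_eq_notMem hC hD hCD.ge hk0 hkn
  obtain ⟨y, hyF, hy, hyD⟩ := hF.exists_card_eq_notMem hD hC (union_comm C D ▸ hCD.ge) hk0 hkn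
  have hxD : x ∈ D := (mem_union.mp (hCD.ge hxF)).resolve_left hxC
  exact one_lt_card.mpr ⟨x, mem_filter.mpr ⟨hxF, hx⟩, y, mem_filter.mpr ⟨hyF, hy⟩,
    fun h ↦ hyD (h ▸ hxD)⟩

theorem two_mul_le_card (hF : ASaturated 3 F) : 2 * n ≤ #F := by
  cases n with
  | zero => simp
  | succ m =>
  rw [card_eq_sum_card_fiberwise (f := card) (t := range (m + 2)) fun x _ ↦
    mem_range.mpr (Nat.lt_succ_of_le ((card_le_univ x).trans_eq (Fintype.card_fin _))),
    sum_range_succ, sum_range_succ']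
  have hbot : 1 ≤ #{A ∈ F | #A = 0} := card_pos.mpr ⟨∅, mem_filter.mpr ⟨hF.empty_mem, rfl⟩⟩
  have htop : 1 ≤ #{A ∈ F | #A = m + 1} :=
    card_pos.mpr ⟨univ, mem_filter.mpr ⟨hF.univ_mem, by simp⟩⟩
  have hmid : ∑ i ∈ range m, 2 ≤ ∑ i ∈ range m, #{A ∈ F | #A = i + 1} :=
    sum_le_sum fun i hi ↦ hF.two_le_card_filter_card_eq i.succ_pos (by simpa using hi)
  simp only [sum_const, card_range, smul_eq_mul] at hmid
  omega

end ASaturated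

end Saturated

section Construction

variable {n : ℕ}

def prefixSet (n i : ℕ) : Finset (Fin n) := {j : Fin n | (j : ℕ) < i}

def prefixSuffixFamily (n : ℕ) : Finset (Finset (Fin n)) :=
  (range (n + 1)).image (prefixSet n) ∪ (Ioo 0 n).image fun i ↦ (prefixSet n i)ᶜ

theorem card_prefixSet {i : ℕ} (h : i ≤ n) : #(prefixSet n i) = i := by
  simp [prefixSet, Fin.card_filter_val_lt, h]

theorem prefixSet_mono : Monotone (prefixSet n) := fun i j hij x hx ↦ by
  simp only [prefixSet, mem_filter, mem_univ, true_and] at hx ⊢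
  omega

theorem prefixSet_zero : prefixSet n 0 = ∅ := by
  simp [prefixSet]

theorem prefixSet_self : prefixSet n n = univ := by
  simp [prefixSet]

theorem prefixSet_mem_prefixSuffixFamily {i : ℕ} (h : i ≤ n) :
    prefixSet n i ∈ prefixSuffixFamily n :=
  mem_union_left _ (mem_image_of_mem _ (mem_range.mpr (Nat.lt_succ_of_le h)))

theorem not_antichainCopy_prefixSuffixFamily : ¬ AntichainCopy 3 (prefixSuffixFamily n) := by
  rintro ⟨G, hGF, hG3, hG⟩
  have hsub : (G : Set (Finset (Fin n))) ⊆
      Set.range (prefixSet n) ∪ Set.range fun i ↦ (prefixSet n i)ᶜ := fun x hx ↦ by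
    rcases mem_union.mp (hGF hx) with hx | hx <;> obtain ⟨i, -, rfl⟩ := mem_image.mp hx
    exacts [Or.inl ⟨i, rfl⟩, Or.inr ⟨i, rfl⟩]
  have := hG.card_le_two prefixSet_mono.isChain_range
    (compl_anti.comp_monotone prefixSet_mono).isChain_range hsub
  omega

theorem aSaturated_prefixSuffixFamily : ASaturated 3 (prefixSuffixFamily n) := by
  refine ⟨not_antichainCopy_prefixSuffixFamily, fun S hS ↦ ?_⟩
  set k := #S
  have hk0 : 0 < k := card_pos.mpr <| nonempty_iff_ne_empty.mpr fun h ↦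
    hS (h ▸ prefixSet_zero ▸ prefixSet_mem_prefixSuffixFamily (Nat.zero_le n))
  have hkn : k < n := lt_of_le_of_ne (card_le_univ S |>.trans_eq (Fintype.card_fin n)) fun h ↦
    hS (eq_univ_of_card S (h.trans (Fintype.card_fin n).symm) ▸ prefixSet_self ▸
      prefixSet_mem_prefixSuffixFamily le_rfl)
  set P := prefixSet n k
  set Q := (prefixSet n (n - k))ᶜ
  have hPF : P ∈ prefixSuffixFamily n := prefixSet_mem_prefixSuffixFamily hkn.le
  have hQF : Q ∈ prefixSuffixFamily n :=
    mem_union_right _ (mem_image_of_mem _ (mem_Ioo.mpr ⟨by omega, by omega⟩))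
  have hP : #P = k := card_prefixSet hkn.le
  have hQ : #Q = k := by
    rw [card_compl, Fintype.card_fin, card_prefixSet (Nat.sub_le n k)]
    omega
  have hPQ : P ≠ Q := fun h ↦ by
    have h0 : (⟨0, by omega⟩ : Fin n) ∈ P := by simp [P, prefixSet, hk0]
    rw [h] at h0
    simp [Q, prefixSet] at h0
    omega
  refine ⟨{S, P, Q}, ?_, ?_, ?_⟩
  · simp [insert_subset_iff, hPF, hQF]
  · exact card_eq_three.mpr ⟨S, P, Q, fun h ↦ hS (h ▸ hPF), fun h ↦ hS (h ▸ hQF), hPQ, rfl⟩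
  · refine Set.Sized.isAntichain (r := k) fun x hx ↦ ?_
    simp only [coe_insert, coe_singleton, Set.mem_insert_iff, Set.mem_singleton_iff] at hx
    rcases hx with rfl | rfl | rfl
    exacts [rfl, hP, hQ]

theorem card_prefixSuffixFamily_le (hn : 0 < n) : #(prefixSuffixFamily n) ≤ 2 * n := by
  calc #(prefixSuffixFamily n) ≤ #(range (n + 1)) + #(Ioo 0 n) :=
        (card_union_le _ _).trans (add_le_add card_image_le card_image_le)
    _ = 2 * n := by
        rw [card_range, Nat.card_Ioo]
        omega

end Construction

/-- For `n ≥ 3`, the minimum size of an induced-`A₃`-saturated family in `B_n`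
is exactly `2n`, i.e. `isat(n, A₃) = 2n`. -/
theorem stmt9 {n : ℕ} (hn : 3 ≤ n) :
    IsLeast {m | ∃ F : Finset (Finset (Fin n)), ASaturated 3 F ∧ F.card = m} (2 * n) := by
  have hsat := aSaturated_prefixSuffixFamily (n := n)
  refine ⟨⟨_, hsat, le_antisymm (card_prefixSuffixFamily_le (by omega)) hsat.two_mul_le_card⟩, ?_⟩
  rintro m ⟨F, hF, rfl⟩
  exact hF.two_mul_le_card
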